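/- Two-dimensional discrete Cantor FUP submultiplicativity: fix M ≥ 2 and nonempty alphabets A, B ⊂ {0,...,M−1}², and for k ≥ 1, N = M^k, define the 2D Cantor sets C_{k,A}, C_{k,B} ⊂ ℤ_N² and the unitary 2D discrete Fourier transform F_{N×N} on ℂ^{N×N}. Then r_{k₁+k₂} ≤ r_{k₁}·r_{k₂} where r_k = ‖1_{C_{k,A}} F_{N×N} 1_{C_{k,B}}‖ (operator norm with respect to the ℓ² norm on entries). -/

import Mathlib

/-!
Write row indices componentwise as `a + M^k₁ b` and column indices as `c + M^k₂ d`, where `a, d`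
have `k₁` base-`M` digits and `b, c` have `k₂`. Membership in the Cantor sets splits digitwise,
and modulo `1`
`(a + M^k₁ b)·(c + M^k₂ d) / M^(k₁+k₂) ≡ b·c / M^k₂ + a·c / M^(k₁+k₂) + a·d / M^k₁`.
So the level-`(k₁+k₂)` matrix is, up to reindexing, `R_{k₂}(b,c) · e(a·c) · R_{k₁}(a,d)` with a
unimodular twist `e`: apply `R_{k₁}` in `d` for each fixed `c`, multiply by the twist, then apply
`R_{k₂}` in `c` for each fixed `a`. Each step is block diagonal with blocks of norm at most
`r_{k₁}`, `1`, `r_{k₂}` respectively, so `r_{k₁+k₂} ≤ r_{k₁} r_{k₂}`.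
-/

/-- The unitary two-dimensional discrete Fourier transform matrix on `ℂ^{N×N}`:
entry `(j,ℓ) ↦ N^{-1} exp(-2πi⟨j,ℓ⟩/N)`. -/
noncomputable def dftMat2 (N : ℕ) : Matrix (Fin N × Fin N) (Fin N × Fin N) ℂ :=
  Matrix.of fun j ℓ => ((N : ℂ))⁻¹ *
    Complex.exp (-2 * Real.pi * Complex.I *
      (((j.1 : ℕ) : ℂ) * ((ℓ.1 : ℕ) : ℂ) + ((j.2 : ℕ) : ℂ) * ((ℓ.2 : ℕ) : ℂ)) / (N : ℂ))

open scoped Classical in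
/-- The diagonal matrix of the coordinate projection onto indices in `S ⊂ ℤ_N²`. -/
noncomputable def projMat2 {N : ℕ} (S : Set (ℕ × ℕ)) :
    Matrix (Fin N × Fin N) (Fin N × Fin N) ℂ :=
  Matrix.of fun j ℓ => if j = ℓ ∧ ((j.1 : ℕ), (j.2 : ℕ)) ∈ S then 1 else 0

/-- The 2D discrete Cantor set: pairs all of whose componentwise base-`M` digit pairs in
positions `< k` lie in the alphabet `A ⊂ ℤ_M²`. -/
def cantor2 (M k : ℕ) (A : Finset (ℕ × ℕ)) : Set (ℕ × ℕ) :=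
  {p | ∀ i < k, ((p.1 / M ^ i) % M, (p.2 / M ^ i) % M) ∈ A}

/-- `r_k = ‖1_{C_{k,A}} F_{N×N} 1_{C_{k,B}}‖`, the operator norm with respect to the
`ℓ²` norm on entries, `N = M^k`. -/
noncomputable def rk2 (M : ℕ) (A B : Finset (ℕ × ℕ)) (k : ℕ) : ℝ :=
  ‖LinearMap.toContinuousLinearMap (Matrix.toEuclideanLin
      (projMat2 (N := M ^ k) (cantor2 M k A) * dftMat2 (M ^ k) *
        projMat2 (cantor2 M k B)))‖


open Matrix
open scoped Matrix.Norms.L2Operator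

section

variable {𝕜 : Type*} [RCLike 𝕜]

lemma EuclideanSpace.norm_toLp_comp_equiv {l m : Type*} [Fintype l] [Fintype m] (x : m → 𝕜)
    (e : l ≃ m) :
    ‖(WithLp.toLp 2 (x ∘ e) : EuclideanSpace 𝕜 l)‖ = ‖(WithLp.toLp 2 x : EuclideanSpace 𝕜 m)‖ :=
  (LinearIsometryEquiv.piLpCongrLeft 2 𝕜 𝕜 e.symm).norm_map (WithLp.toLp 2 x)

namespace Matrix

variable {l m n o : Type*} [Fintype l] [Fintype m] [Fintype n] [Fintype o]
  [DecidableEq n] [DecidableEq o]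

lemma l2_opNorm_le_of_mulVec {A : Matrix m n 𝕜} {c : ℝ} (hc : 0 ≤ c)
    (h : ∀ v : EuclideanSpace 𝕜 n, ‖(WithLp.toLp 2 (A *ᵥ v.ofLp) : EuclideanSpace 𝕜 m)‖ ≤ c * ‖v‖) :
    ‖A‖ ≤ c :=
  ContinuousLinearMap.opNorm_le_bound _ hc h

lemma l2_opNorm_submatrix_le (A : Matrix m n 𝕜) (e : l ≃ m) (f : o ≃ n) :
    ‖A.submatrix e f‖ ≤ ‖A‖ := by
  refine l2_opNorm_le_of_mulVec (norm_nonneg A) fun v => ?_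
  have := A.l2_opNorm_mulVec (WithLp.toLp 2 (v.ofLp ∘ f.symm))
  rw [EuclideanSpace.norm_toLp_comp_equiv] at this
  rwa [submatrix_mulVec_equiv, EuclideanSpace.norm_toLp_comp_equiv]

lemma l2_opNorm_submatrix (A : Matrix m n 𝕜) (e : l ≃ m) (f : o ≃ n) :
    ‖A.submatrix e f‖ = ‖A‖ := by
  refine le_antisymm (A.l2_opNorm_submatrix_le e f) ?_
  simpa using (A.submatrix e f).l2_opNorm_submatrix_le e.symm f.symm

lemma l2_opNorm_blockDiagonal_le (M : o → Matrix m n 𝕜) {c : ℝ} (hc : 0 ≤ c)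
    (h : ∀ k, ‖M k‖ ≤ c) : ‖blockDiagonal M‖ ≤ c := by
  refine l2_opNorm_le_of_mulVec hc fun v => ?_
  let w : o → EuclideanSpace 𝕜 n := fun k => WithLp.toLp 2 fun j => v (j, k)
  have hblock : ∀ i k, (blockDiagonal M *ᵥ v.ofLp) (i, k) = (M k *ᵥ (w k).ofLp) i := by
    intro i k
    simp [mulVec, dotProduct, blockDiagonal_apply, Fintype.sum_prod_type_right, w]
  have hk : ∀ k, ‖(WithLp.toLp 2 (M k *ᵥ (w k).ofLp) : EuclideanSpace 𝕜 m)‖ ^ 2 ≤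
      (c * ‖w k‖) ^ 2 := by
    intro k
    gcongr
    exact ((M k).l2_opNorm_mulVec (w k)).trans (by gcongr; exact h k)
  refine (sq_le_sq₀ (by positivity) (by positivity)).mp ?_
  simp only [EuclideanSpace.norm_sq_eq, Fintype.sum_prod_type_right, mul_pow, Finset.mul_sum]
    at hk ⊢
  simpa [hblock] using Finset.sum_le_sum fun k _ => hk k

section TwistedKronecker

variable {α β γ δ : Type*}

def twistedKronecker (Q : Matrix β γ 𝕜) (w : α → γ → 𝕜) (P : Matrix α δ 𝕜) :
    Matrix (α × β) (γ × δ) 𝕜 :=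
  of fun i j => Q i.2 j.1 * w i.1 j.1 * P i.1 j.2

variable [Fintype α] [Fintype γ] [DecidableEq α] [DecidableEq γ]

lemma twistedKronecker_eq_mul (Q : Matrix β γ 𝕜) (w : α → γ → 𝕜) (P : Matrix α δ 𝕜) :
    twistedKronecker Q w P =
      (blockDiagonal fun a => Q * diagonal (w a)).submatrix (Equiv.prodComm α β)
          (Equiv.prodComm α γ) *
        (blockDiagonal fun _ : γ => P).submatrix (Equiv.refl (α × γ)) (Equiv.prodComm γ δ) := by
  ext ⟨a, b⟩ ⟨c, d⟩
  simp only [twistedKronecker, mul_apply, submatrix_apply, blockDiagonal_apply,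
    Equiv.prodComm_apply, Prod.swap_prod_mk, Equiv.refl_apply, Fintype.sum_prod_type, of_apply]
  simp [diagonal_apply]

variable [Fintype β] [Fintype δ] [DecidableEq δ]

lemma l2_opNorm_twistedKronecker_le (Q : Matrix β γ 𝕜) {w : α → γ → 𝕜}
    (hw : ∀ a c, ‖w a c‖ ≤ 1) (P : Matrix α δ 𝕜) :
    ‖twistedKronecker Q w P‖ ≤ ‖Q‖ * ‖P‖ := by
  rw [twistedKronecker_eq_mul]
  refine (l2_opNorm_mul _ _).trans ?_
  rw [l2_opNorm_submatrix, l2_opNorm_submatrix]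
  gcongr
  · refine l2_opNorm_blockDiagonal_le _ (norm_nonneg Q) fun a => ?_
    calc ‖Q * diagonal (w a)‖ ≤ ‖Q‖ * ‖diagonal (w a)‖ := l2_opNorm_mul _ _
      _ ≤ ‖Q‖ * 1 := by
        gcongr
        rw [l2_opNorm_diagonal]
        exact (pi_norm_le_iff_of_nonneg zero_le_one).mpr (hw a)
      _ = ‖Q‖ := mul_one _
  · exact l2_opNorm_blockDiagonal_le _ (norm_nonneg P) fun _ => le_rfl

end TwistedKronecker

end Matrix

end

lemma add_mul_pow_div_pow_mod {M k a : ℕ} (hM : 0 < M) (ha : a < M ^ k) (b i : ℕ) :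
    (a + M ^ k * b) / M ^ i % M = if i < k then a / M ^ i % M else b / M ^ (i - k) % M := by
  split_ifs with hi
  · obtain ⟨j, rfl⟩ := Nat.exists_eq_add_of_lt hi
    rw [show a + M ^ (i + j + 1) * b = a + M ^ i * (M * (M ^ j * b)) by ring,
      Nat.add_mul_div_left _ _ (pow_pos hM i), Nat.add_mul_mod_self_left]
  · obtain ⟨j, rfl⟩ := Nat.exists_eq_add_of_le (not_lt.mp hi)
    rw [pow_add, ← Nat.div_div_eq_div_mul, Nat.add_mul_div_left _ _ (pow_pos hM k),
      Nat.div_eq_of_lt ha, zero_add, Nat.add_sub_cancel_left]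

lemma mem_cantor2_add_smul_iff {M k₁ k₂ : ℕ} (hM : 0 < M) (A : Finset (ℕ × ℕ)) {a : ℕ × ℕ}
    (ha₁ : a.1 < M ^ k₁) (ha₂ : a.2 < M ^ k₁) (b : ℕ × ℕ) :
    a + M ^ k₁ • b ∈ cantor2 M (k₁ + k₂) A ↔ a ∈ cantor2 M k₁ A ∧ b ∈ cantor2 M k₂ A := by
  simp only [cantor2, Set.mem_ofPred_eq, Prod.fst_add, Prod.snd_add, Prod.smul_fst,
    Prod.smul_snd, smul_eq_mul, add_mul_pow_div_pow_mod hM ha₁, add_mul_pow_div_pow_mod hM ha₂]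
  constructor
  · intro h
    refine ⟨fun i hi => by simpa [hi] using h i (by omega), fun i hi => ?_⟩
    simpa using h (k₁ + i) (by omega)
  · rintro ⟨hlow, hhigh⟩ i hi
    split_ifs with h
    · exact hlow i h
    · exact hhigh (i - k₁) (by omega)

noncomputable def dftPhase (n : ℕ) (x y : ℕ × ℕ) : ℂ :=
  Complex.exp (-2 * Real.pi * Complex.I * ((x.1 : ℂ) * y.1 + (x.2 : ℂ) * y.2) / n)

lemma dftMat2_apply (N : ℕ) (j ℓ : Fin N × Fin N) :
    dftMat2 N j ℓ =
      (N : ℂ)⁻¹ * dftPhase N (Prod.map Fin.val Fin.val j) (Prod.map Fin.val Fin.val ℓ) :=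
  rfl

lemma norm_dftPhase (n : ℕ) (x y : ℕ × ℕ) : ‖dftPhase n x y‖ = 1 := by
  rw [dftPhase, Complex.norm_exp]
  simp

lemma dftPhase_add_smul {n₁ n₂ : ℕ} (hn₁ : n₁ ≠ 0) (hn₂ : n₂ ≠ 0) (a b c d : ℕ × ℕ) :
    dftPhase (n₁ * n₂) (a + n₁ • b) (c + n₂ • d) =
      dftPhase n₂ b c * dftPhase (n₁ * n₂) a c * dftPhase n₁ a d := by
  have hsplit : -2 * Real.pi * Complex.I *
        (((a + n₁ • b).1 : ℂ) * (c + n₂ • d).1 + ((a + n₁ • b).2 : ℂ) * (c + n₂ • d).2) /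
          ((n₁ * n₂ : ℕ) : ℂ) =
      -2 * Real.pi * Complex.I * ((b.1 : ℂ) * c.1 + (b.2 : ℂ) * c.2) / n₂ +
        -2 * Real.pi * Complex.I * ((a.1 : ℂ) * c.1 + (a.2 : ℂ) * c.2) / ((n₁ * n₂ : ℕ) : ℂ) +
        -2 * Real.pi * Complex.I * ((a.1 : ℂ) * d.1 + (a.2 : ℂ) * d.2) / n₁ +
        ((-(b.1 * d.1 + b.2 * d.2 : ℕ) : ℤ) : ℂ) * (2 * Real.pi * Complex.I) := by
    simp only [Prod.fst_add, Prod.snd_add, Prod.smul_fst, Prod.smul_snd, smul_eq_mul]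
    push_cast
    field_simp
    ring
  rw [dftPhase, hsplit, Complex.exp_add, Complex.exp_int_mul_two_pi_mul_I, mul_one,
    Complex.exp_add, Complex.exp_add]
  rfl

def digitSplit {n₁ n₂ n : ℕ} (h : n₂ * n₁ = n) : Fin n ≃ Fin n₁ × Fin n₂ :=
  (finProdFinEquiv.trans (finCongr h)).symm.trans (Equiv.prodComm _ _)

def digitSplit2 {n₁ n₂ n : ℕ} (h : n₂ * n₁ = n) :
    Fin n × Fin n ≃ (Fin n₁ × Fin n₁) × (Fin n₂ × Fin n₂) :=
  ((digitSplit h).prodCongr (digitSplit h)).trans (Equiv.prodProdProdComm _ _ _ _)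

lemma map_val_digitSplit2_symm {n₁ n₂ n : ℕ} (h : n₂ * n₁ = n) (a : Fin n₁ × Fin n₁)
    (b : Fin n₂ × Fin n₂) :
    Prod.map Fin.val Fin.val ((digitSplit2 h).symm (a, b)) =
      Prod.map Fin.val Fin.val a + n₁ • Prod.map Fin.val Fin.val b := by
  rfl

open scoped Classical in
lemma projMat2_eq_diagonal {N : ℕ} (S : Set (ℕ × ℕ)) :
    projMat2 (N := N) S = diagonal fun j => if Prod.map Fin.val Fin.val j ∈ S then 1 else 0 := by
  ext j ℓ
  by_cases h : j = ℓ
  · simp [projMat2, h]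
    rfl
  · simp [projMat2, h]

open scoped Classical in
lemma projMat2_mul_mul_projMat2_apply {N : ℕ} (S T : Set (ℕ × ℕ))
    (F : Matrix (Fin N × Fin N) (Fin N × Fin N) ℂ) (j ℓ : Fin N × Fin N) :
    (projMat2 S * F * projMat2 T : Matrix (Fin N × Fin N) (Fin N × Fin N) ℂ) j ℓ =
      (if Prod.map Fin.val Fin.val j ∈ S then 1 else 0) * F j ℓ *
        (if Prod.map Fin.val Fin.val ℓ ∈ T then 1 else 0) := by
  rw [projMat2_eq_diagonal, projMat2_eq_diagonal, mul_diagonal, diagonal_mul]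

lemma ite_one_zero_eq_mul_of_iff {R : Type*} [MulZeroOneClass R] {P Q S : Prop} [Decidable P]
    [Decidable Q] [Decidable S] (h : P ↔ Q ∧ S) :
    (if P then (1 : R) else 0) = (if Q then 1 else 0) * (if S then 1 else 0) := by
  rw [ite_zero_mul_ite_zero, one_mul]
  exact if_congr h rfl rfl

noncomputable def cantorFUP (M : ℕ) (A B : Finset (ℕ × ℕ)) (k : ℕ) :
    Matrix (Fin (M ^ k) × Fin (M ^ k)) (Fin (M ^ k) × Fin (M ^ k)) ℂ :=
  projMat2 (cantor2 M k A) * dftMat2 (M ^ k) * projMat2 (cantor2 M k B)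

lemma cantorFUP_add_submatrix {M : ℕ} (hM : 0 < M) (A B : Finset (ℕ × ℕ)) (k₁ k₂ : ℕ) :
    (cantorFUP M A B (k₁ + k₂)).submatrix
        (digitSplit2 (by rw [← pow_add, add_comm])).symm
        (digitSplit2 (pow_add M k₁ k₂).symm).symm =
      twistedKronecker (cantorFUP M A B k₂)
        (fun a c => dftPhase (M ^ (k₁ + k₂)) (Prod.map Fin.val Fin.val a)
          (Prod.map Fin.val Fin.val c))
        (cantorFUP M A B k₁) := by
  classical
  ext ⟨a, b⟩ ⟨c, d⟩
  have hrow := mem_cantor2_add_smul_iff (k₂ := k₂) hM A (a := Prod.map Fin.val Fin.val a)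
    a.1.isLt a.2.isLt (Prod.map Fin.val Fin.val b)
  have hcol := mem_cantor2_add_smul_iff (k₂ := k₁) hM B (a := Prod.map Fin.val Fin.val c)
    c.1.isLt c.2.isLt (Prod.map Fin.val Fin.val d)
  rw [add_comm k₂] at hcol
  simp only [submatrix_apply, twistedKronecker, of_apply, cantorFUP,
    projMat2_mul_mul_projMat2_apply, dftMat2_apply]
  rw [map_val_digitSplit2_symm, map_val_digitSplit2_symm, pow_add,
    dftPhase_add_smul (pow_ne_zero _ hM.ne') (pow_ne_zero _ hM.ne'),
    ite_one_zero_eq_mul_of_iff hrow, ite_one_zero_eq_mul_of_iff hcol]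
  push_cast
  ring

theorem stmt19_general (M : ℕ) (hM : 2 ≤ M) (A B : Finset (ℕ × ℕ)) (k1 k2 : ℕ) :
    rk2 M A B (k1 + k2) ≤ rk2 M A B k1 * rk2 M A B k2 := by
  calc rk2 M A B (k1 + k2) = ‖cantorFUP M A B (k1 + k2)‖ := rfl
    _ = ‖twistedKronecker (cantorFUP M A B k2) _ (cantorFUP M A B k1)‖ := by
      rw [← cantorFUP_add_submatrix (by omega), l2_opNorm_submatrix]
    _ ≤ rk2 M A B k2 * rk2 M A B k1 :=
      l2_opNorm_twistedKronecker_le _ (fun _ _ => (norm_dftPhase _ _ _).le) _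
    _ = rk2 M A B k1 * rk2 M A B k2 := mul_comm _ _

/-- Submultiplicativity of the 2D discrete Cantor FUP norms:
`r_{k₁+k₂} ≤ r_{k₁} · r_{k₂}`. -/
theorem stmt19 (M : ℕ) (hM : 2 ≤ M) (A B : Finset (ℕ × ℕ))
    (hA : A.Nonempty) (hB : B.Nonempty)
    (hAM : ∀ p ∈ A, p.1 < M ∧ p.2 < M) (hBM : ∀ p ∈ B, p.1 < M ∧ p.2 < M)
    (k1 k2 : ℕ) (h1 : 1 ≤ k1) (h2 : 1 ≤ k2) :
    rk2 M A B (k1 + k2) ≤ rk2 M A B k1 * rk2 M A B k2 :=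
  stmt19_general M hM A B k1 k2
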